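/- Let E, F be closed subsets of an uncountable ω₁-compact subspace S of a tree T of height ω₁. If E ∩ F is countable, then E↓ ∩ F↓ is countable. -/

import Mathlib

open Set Topology Cardinal Ordinal

universe u v

/-- The order (interval) topology of a tree. -/
def treeTopology (T : Type u) [PartialOrder T] : TopologicalSpace T :=
  TopologicalSpace.generateFrom
    ({s | ∃ a b : T, a < b ∧ s = Set.Ioc a b} ∪
     {s | ∃ b : T, (∀ a : T, ¬a < b) ∧ s = {b}})

/-- A tree order: the predecessors of every element are well-ordered. -/
def IsTreeOrder (T : Type u) [PartialOrder T] : Prop :=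
  ∀ x : T, IsWellOrder {y : T // y < x} (· < ·)

/-- The height of an element: the order type of its set of predecessors. -/
noncomputable def treeHeight {T : Type u} [PartialOrder T] (hT : IsTreeOrder T) (x : T) :
    Ordinal.{u} :=
  @Ordinal.type {y : T // y < x} (· < ·) (hT x)

/-- Hausdorff tree: elements at limit levels are determined by their predecessors. -/
def IsHausdorffTree (T : Type u) [PartialOrder T] : Prop :=
  ∀ x y : T, Set.Iio x = Set.Iio y → (Set.Iio x).Nonempty →
    (∀ z ∈ Set.Iio x, ∃ w ∈ Set.Iio x, z < w) → x = y

/-- The tree has height ω₁. -/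
def HasHeightOmega1 {T : Type u} [PartialOrder T] (hT : IsTreeOrder T) : Prop :=
  (∀ x : T, treeHeight hT x < ω₁) ∧ ∀ α < ω₁, ∃ x : T, treeHeight hT x = α

/-- Downward closure of a subset of a tree. -/
def downClosure {T : Type u} [PartialOrder T] (S : Set T) : Set T := {x | ∃ y ∈ S, x ≤ y}

/-- `D` is a closed discrete subset of the subspace `S`. -/
def ClosedDiscreteIn {T : Type u} [TopologicalSpace T] (D S : Set T) : Prop :=
  D ⊆ S ∧ closure D ∩ S ⊆ D ∧ ∀ x ∈ D, ∃ U : Set T, IsOpen U ∧ x ∈ U ∧ U ∩ D = {x}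

/-- `S` is ω₁-compact in the subspace topology: every closed discrete subset is countable. -/
def OmegaOneCompactIn {T : Type u} [TopologicalSpace T] (S : Set T) : Prop :=
  ∀ D : Set T, ClosedDiscreteIn D S → D.Countable

/-- A club (closed unbounded) subset of `ω₁` (as a set of ordinals, with the order topology). -/
def IsClubBelowOmega1 (C : Set Ordinal.{u}) : Prop :=
  C ⊆ Set.Iio ω₁ ∧ (∀ α < ω₁, ∃ β ∈ C, α ≤ β) ∧ ∀ α < ω₁, α ∈ closure C → α ∈ C

/-- A stationary subset of `ω₁`. -/
def IsStationaryBelowOmega1 (S : Set Ordinal.{u}) : Prop :=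
  S ⊆ Set.Iio ω₁ ∧ ∀ C : Set Ordinal.{u}, IsClubBelowOmega1 C → (S ∩ C).Nonempty

/-! If `E↓ ∩ F↓` were uncountable then, because every level of `E↓` is countable and the traces
`{n ≤ e | n ∈ F↓}` of the points `e ∈ E \ F↓` have uniformly bounded height, `E` would contain
points of arbitrarily large height lying strictly below points of `F`. Among these pairs `e < f`
choose uncountably many whose height intervals are pairwise disjoint. By ω₁-compactness some
`z ∈ S` is a limit from below of the chosen `f`, and the disjointness makes it a limit from below
of the chosen `e` as well. As `E` and `F` are closed in `S`, `z ∈ E ∩ F`; but `z` lies above points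
of arbitrarily large height, whereas the countable set `E ∩ F` has bounded height. -/

theorem countable_Iio_of_lt_omega_one {o : Ordinal.{u}} (h : o < ω₁) : (Iio o).Countable := by
  rw [← Set.countable_coe_iff, ← Cardinal.mk_le_aleph0_iff, Cardinal.mk_Iio_ordinal,
    Cardinal.lift_le_aleph0, ← Cardinal.lt_aleph_one_iff]
  exact lt_omega_iff_card_lt.1 h

theorem exists_lt_omega_one_forall_lt {ι : Type v} {s : Set ι} (hs : s.Countable)
    (f : ι → Ordinal.{u}) (hf : ∀ i ∈ s, f i < ω₁) : ∃ β < ω₁, ∀ i ∈ s, f i < β := by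
  have := hs.to_subtype
  refine ⟨Order.succ (⨆ i : s, f i), (isSuccLimit_omega 1).succ_lt
    (Ordinal.iSup_lt_omega_one fun i => hf i i.2), fun i hi => Order.lt_succ_iff.2 ?_⟩
  exact Ordinal.le_iSup (fun i : s => f i) ⟨i, hi⟩

theorem exists_maximal_pairwise_subset {α : Type*} (s : Set α) (r : α → α → Prop) :
    ∃ m ⊆ s, m.Pairwise r ∧ ∀ x ∈ s, (insert x m).Pairwise r → x ∈ m := by
  obtain ⟨m, ⟨hms, hm⟩, hmax⟩ := zorn_subset {t | t ⊆ s ∧ t.Pairwise r} fun c hc hchain =>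
    ⟨⋃₀ c, ⟨sUnion_subset fun t ht => (hc ht).1,
      (pairwise_sUnion hchain.directedOn).2 fun t ht => (hc ht).2⟩,
      fun t ht => subset_sUnion_of_mem ht⟩
  exact ⟨m, hms, hm, fun x hx hins => hmax ⟨insert_subset hx hms, hins⟩ (subset_insert x m)
    (mem_insert x m)⟩

theorem exists_uncountable_pairwise_separated {ι : Type v} {P : Set ι} (a b : ι → Ordinal.{u})
    (hab : ∀ i ∈ P, a i ≤ b i) (hb : ∀ i ∈ P, b i < ω₁) (ha : ∀ γ < ω₁, ∃ i ∈ P, γ ≤ a i) :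
    ∃ M ⊆ P, ¬M.Countable ∧ M.Pairwise fun i j => b i < a j ∨ b j < a i := by
  obtain ⟨M, hMP, hM, hmax⟩ := exists_maximal_pairwise_subset P fun i j => b i < a j ∨ b j < a i
  refine ⟨M, hMP, fun hMc => ?_, hM⟩
  obtain ⟨β, hβ, hMβ⟩ := exists_lt_omega_one_forall_lt hMc b fun i hi => hb i (hMP hi)
  obtain ⟨i, hiP, hβi⟩ := ha β hβ
  have hiM : i ∈ M := hmax i hiP <| hM.insert
    fun j hj _ => ⟨Or.inr ((hMβ j hj).trans_le hβi), Or.inl ((hMβ j hj).trans_le hβi)⟩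
  exact ((hMβ i hiM).trans_le hβi).not_ge (hab i hiP)

namespace IsTreeOrder

variable {T : Type u} [PartialOrder T]

theorem le_total_of_le (hT : IsTreeOrder T) {a b t : T} (ha : a ≤ t) (hb : b ≤ t) :
    a ≤ b ∨ b ≤ a := by
  rcases ha.eq_or_lt with rfl | ha
  · exact Or.inr hb
  rcases hb.eq_or_lt with rfl | hb
  · exact Or.inl ha.le
  by_contra! h
  have hab := (hT t).trichotomous ⟨a, ha⟩ ⟨b, hb⟩ (fun h' => h.1 (Subtype.mk_lt_mk.1 h').le)
    (fun h' => h.2 (Subtype.mk_lt_mk.1 h').le)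
  exact h.1 (congrArg Subtype.val hab).le

theorem treeHeight_strictMono (hT : IsTreeOrder T) : StrictMono (treeHeight hT) := by
  intro a b hab
  let seg : @PrincipalSeg {y : T // y < a} {y : T // y < b} (· < ·) (· < ·) :=
    { toFun := fun y => ⟨y, y.2.trans hab⟩
      inj' := fun y z h => Subtype.ext (Subtype.mk.inj h)
      map_rel_iff' := Iff.rfl
      top := ⟨a, hab⟩
      mem_range_iff_rel' := fun y => ⟨by rintro ⟨z, rfl⟩; exact z.2, fun hy => ⟨⟨y, hy⟩, rfl⟩⟩ }
  exact @PrincipalSeg.ordinal_type_lt _ _ _ _ (hT a) (hT b) seg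

theorem le_of_treeHeight_le (hT : IsTreeOrder T) {a b t : T} (ha : a ≤ t) (hb : b ≤ t)
    (h : treeHeight hT a ≤ treeHeight hT b) : a ≤ b := by
  rcases hT.le_total_of_le ha hb with hab | hba
  · exact hab
  rcases hba.eq_or_lt with rfl | hba
  · exact le_rfl
  · exact absurd h (hT.treeHeight_strictMono hba).not_ge

theorem lt_of_treeHeight_lt (hT : IsTreeOrder T) {a b t : T} (ha : a ≤ t) (hb : b ≤ t)
    (h : treeHeight hT a < treeHeight hT b) : a < b :=
  (hT.le_of_treeHeight_le ha hb h.le).lt_of_ne (by rintro rfl; exact h.false)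

theorem eq_of_treeHeight_eq (hT : IsTreeOrder T) {a b t : T} (ha : a ≤ t) (hb : b ≤ t)
    (h : treeHeight hT a = treeHeight hT b) : a = b :=
  (hT.le_of_treeHeight_le ha hb h.le).antisymm (hT.le_of_treeHeight_le hb ha h.ge)

end IsTreeOrder

def IsLimitFromBelow {T : Type u} [PartialOrder T] (A : Set T) (z : T) : Prop :=
  ¬IsMin z ∧ ∀ c < z, ∃ a ∈ A, c < a ∧ a < z

namespace IsLimitFromBelow

variable {T : Type u} [PartialOrder T] {A B : Set T} {z : T}

theorem mono (h : IsLimitFromBelow A z) (hAB : A ⊆ B) : IsLimitFromBelow B z :=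
  ⟨h.1, fun c hc => (h.2 c hc).imp fun _ ⟨ha, hca, haz⟩ => ⟨hAB ha, hca, haz⟩⟩

theorem exists_lt (h : IsLimitFromBelow A z) : ∃ a ∈ A, a < z := by
  obtain ⟨c, hc⟩ := not_isMin_iff.1 h.1
  obtain ⟨a, ha, -, haz⟩ := h.2 c hc
  exact ⟨a, ha, haz⟩

theorem of_image (hT : IsTreeOrder T) {M : Set T} {up : T → T} (hup : ∀ e ∈ M, e < up e)
    (hsep : M.Pairwise fun e e' =>
      treeHeight hT (up e) < treeHeight hT e' ∨ treeHeight hT (up e') < treeHeight hT e)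
    (h : IsLimitFromBelow (up '' M) z) : IsLimitFromBelow M z := by
  refine ⟨h.1, fun c hc => ?_⟩
  obtain ⟨_, ⟨e, heM, rfl⟩, hce, hez⟩ := h.2 c hc
  obtain ⟨_, ⟨e', he'M, rfl⟩, hee', he'z⟩ := h.2 (up e) hez
  have hne : e ≠ e' := by rintro rfl; exact hee'.false
  have hht : treeHeight hT (up e) < treeHeight hT e' := by
    refine (hsep heM he'M hne).resolve_right fun h' => h'.not_gt ?_
    exact (hT.treeHeight_strictMono (hup e heM)).trans (hT.treeHeight_strictMono hee')
  have he'z : e' < z := (hup e' he'M).trans he'z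
  exact ⟨e', he'M, hT.lt_of_treeHeight_lt hc.le he'z.le
    ((hT.treeHeight_strictMono hce).trans hht), he'z⟩

end IsLimitFromBelow

namespace treeTopology

attribute [local instance] treeTopology

variable {T : Type u} [PartialOrder T]

theorem isOpen_Ioc {a b : T} (h : a < b) : IsOpen (Ioc a b) :=
  TopologicalSpace.isOpen_generateFrom_of_mem (Or.inl ⟨a, b, h, rfl⟩)

theorem isOpen_singleton_of_isMin {b : T} (h : IsMin b) : IsOpen ({b} : Set T) :=
  TopologicalSpace.isOpen_generateFrom_of_mem (Or.inr ⟨b, fun _ => h.not_lt, rfl⟩)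

theorem exists_Ioc_subset (hT : IsTreeOrder T) {z : T} {U : Set T} (hz : ¬IsMin z)
    (hU : IsOpen U) (hzU : z ∈ U) : ∃ c < z, Ioc c z ⊆ U := by
  induction hU with
  | basic s hs =>
    rcases hs with ⟨a, b, -, rfl⟩ | ⟨b, hb, rfl⟩
    · exact ⟨a, hzU.1, fun y hy => ⟨hy.1, hy.2.trans hzU.2⟩⟩
    · obtain ⟨c, hc⟩ := not_isMin_iff.1 hz
      exact absurd (hzU ▸ hc) (hb c)
  | univ =>
    obtain ⟨c, hc⟩ := not_isMin_iff.1 hz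
    exact ⟨c, hc, subset_univ _⟩
  | inter U V _ _ ihU ihV =>
    obtain ⟨c, hc, hcU⟩ := ihU hzU.1
    obtain ⟨d, hd, hdV⟩ := ihV hzU.2
    rcases hT.le_total_of_le hc.le hd.le with hcd | hdc
    · exact ⟨d, hd, fun y hy => ⟨hcU ⟨hcd.trans_lt hy.1, hy.2⟩, hdV hy⟩⟩
    · exact ⟨c, hc, fun y hy => ⟨hcU hy, hdV ⟨hdc.trans_lt hy.1, hy.2⟩⟩⟩
  | sUnion 𝒰 _ ih =>
    obtain ⟨U, hU𝒰, hzU⟩ := hzU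
    obtain ⟨c, hc, hcU⟩ := ih U hU𝒰 hzU
    exact ⟨c, hc, hcU.trans (subset_sUnion_of_mem hU𝒰)⟩

theorem mem_closure_of_isLimitFromBelow (hT : IsTreeOrder T) {A : Set T} {z : T}
    (h : IsLimitFromBelow A z) : z ∈ closure A := by
  refine mem_closure_iff.2 fun U hU hzU => ?_
  obtain ⟨c, hc, hcU⟩ := exists_Ioc_subset hT h.1 hU hzU
  obtain ⟨a, ha, hca, haz⟩ := h.2 c hc
  exact ⟨a, hcU ⟨hca, haz.le⟩, ha⟩

theorem isLimitFromBelow_of_mem_closure {A : Set T} {z : T} (hz : z ∈ closure A) (hzA : z ∉ A) :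
    IsLimitFromBelow A z := by
  refine ⟨fun hmin => ?_, fun c hc => ?_⟩
  · obtain ⟨a, rfl, ha⟩ := mem_closure_iff.1 hz _ (isOpen_singleton_of_isMin hmin) rfl
    exact hzA ha
  · obtain ⟨a, ⟨hca, haz⟩, ha⟩ := mem_closure_iff.1 hz _ (isOpen_Ioc hc) ⟨hc, le_rfl⟩
    exact ⟨a, ha, hca, haz.lt_of_ne (by rintro rfl; exact hzA ha)⟩

theorem closedDiscreteIn_of_forall_not_isLimitFromBelow {D S : Set T} (hDS : D ⊆ S)
    (h : ∀ z ∈ S, ¬IsLimitFromBelow D z) : ClosedDiscreteIn D S := by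
  refine ⟨hDS, fun z ⟨hz, hzS⟩ => ?_, fun x hx => ?_⟩
  · by_contra hzD
    exact h z hzS (isLimitFromBelow_of_mem_closure hz hzD)
  by_cases hmin : IsMin x
  · exact ⟨{x}, isOpen_singleton_of_isMin hmin, rfl, inter_eq_left.2 (singleton_subset_iff.2 hx)⟩
  · obtain ⟨c, hc, hgap⟩ : ∃ c < x, ∀ a ∈ D, c < a → ¬a < x := by
      simpa [IsLimitFromBelow, hmin] using h x (hDS hx)
    refine ⟨Ioc c x, isOpen_Ioc hc, ⟨hc, le_rfl⟩, eq_singleton_iff_unique_mem.2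
      ⟨⟨⟨hc, le_rfl⟩, hx⟩, fun a ⟨⟨hca, hax⟩, ha⟩ => ?_⟩⟩
    by_contra hne
    exact hgap a ha hca (hax.lt_of_ne hne)

theorem _root_.OmegaOneCompactIn.exists_isLimitFromBelow {S Y : Set T} (hS : OmegaOneCompactIn S)
    (hYS : Y ⊆ S) (hY : ¬Y.Countable) : ∃ z ∈ S, IsLimitFromBelow Y z := by
  by_contra! h
  exact hY (hS Y (closedDiscreteIn_of_forall_not_isLimitFromBelow hYS h))

theorem _root_.OmegaOneCompactIn.countable_of_isAntichain {S D : Set T}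
    (hS : OmegaOneCompactIn S) (hDS : D ⊆ S) (hD : IsAntichain (· ≤ ·) D) : D.Countable := by
  by_contra hDc
  obtain ⟨z, -, hz⟩ := hS.exists_isLimitFromBelow hDS hDc
  obtain ⟨a, ha, haz⟩ := hz.exists_lt
  obtain ⟨b, hb, hab, -⟩ := hz.2 a haz
  exact hD ha hb hab.ne hab.le

end treeTopology

section OmegaOneCompact

attribute [local instance] treeTopology

variable {T : Type u} [PartialOrder T] {S A E F : Set T}

theorem countable_downClosure_inter_treeHeight_eq (hT : IsTreeOrder T) (hS : OmegaOneCompactIn S)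
    (hAS : A ⊆ S) (α : Ordinal.{u}) : {x ∈ downClosure A | treeHeight hT x = α}.Countable := by
  set L := {x ∈ downClosure A | treeHeight hT x = α}
  choose! w hwA hxw using fun x (hx : x ∈ L) => hx.1
  have hw : ∀ x ∈ L, ∀ y ∈ L, w x ≤ w y → x = y := fun x hx y hy hxy =>
    hT.eq_of_treeHeight_eq ((hxw x hx).trans hxy) (hxw y hy) (hx.2.trans hy.2.symm)
  have hanti : IsAntichain (· ≤ ·) (w '' L) := by
    rintro _ ⟨x, hx, rfl⟩ _ ⟨y, hy, rfl⟩ hne hle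
    exact hne (congrArg w (hw x hx y hy hle))
  exact (mapsTo_image w L).countable_of_injOn (fun x hx y hy h => hw x hx y hy h.le)
    (hS.countable_of_isAntichain (image_subset_iff.2 fun x hx => hAS (hwA x hx)) hanti)

theorem exists_le_treeHeight_of_not_countable (hT : IsTreeOrder T) (hS : OmegaOneCompactIn S)
    (hAS : A ⊆ S) {X : Set T} (hXA : X ⊆ downClosure A) (hX : ¬X.Countable) {γ : Ordinal.{u}}
    (hγ : γ < ω₁) : ∃ x ∈ X, γ ≤ treeHeight hT x := by
  by_contra! h
  refine hX (((countable_Iio_of_lt_omega_one hγ).biUnion fun α _ =>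
    countable_downClosure_inter_treeHeight_eq hT hS hAS α).mono fun x hx => ?_)
  exact mem_biUnion (h x hx) ⟨hXA hx, rfl⟩

/-- The trace `{n ≤ e | n ∈ A↓}` is the same for comparable points `e` of `B \ A↓`, so every trace
is already realised on a maximal antichain of `B \ A↓`, which is countable. -/
theorem exists_treeHeight_bound_of_le_notMem_downClosure (hT : IsTreeOrder T)
    (hS : OmegaOneCompactIn S) (hht : ∀ x, treeHeight hT x < ω₁) {B : Set T} (hBS : B ⊆ S) :
    ∃ γ < ω₁, ∀ e ∈ B, e ∉ downClosure A →
      ∀ n ≤ e, n ∈ downClosure A → treeHeight hT n < γ := by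
  obtain ⟨M, hMsub, hManti, hMmax⟩ :=
    exists_maximal_pairwise_subset (B \ downClosure A) fun a b => ¬a ≤ b
  obtain ⟨γ, hγ, hMγ⟩ := exists_lt_omega_one_forall_lt
    (hS.countable_of_isAntichain (hMsub.trans (sdiff_subset.trans hBS)) hManti)
    (treeHeight hT) fun x _ => hht x
  refine ⟨γ, hγ, fun e heB heA n hne hnA => ?_⟩
  obtain ⟨m, hmM, hem | hme⟩ : ∃ m ∈ M, e ≤ m ∨ m ≤ e := by
    by_contra! h
    exact (h e (hMmax e ⟨heB, heA⟩ (hManti.insert fun m hm _ => h m hm))).1 le_rfl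
  · exact (hT.treeHeight_strictMono.monotone (hne.trans hem)).trans_lt (hMγ m hmM)
  rcases hT.le_total_of_le hne hme with hnm | hmn
  · exact (hT.treeHeight_strictMono.monotone hnm).trans_lt (hMγ m hmM)
  · obtain ⟨a, ha, hna⟩ := hnA
    exact absurd ⟨a, ha, hmn.trans hna⟩ (hMsub hmM).2

theorem forall_exists_mem_lt_mem_of_not_countable_inter_downClosure (hT : IsTreeOrder T)
    (hS : OmegaOneCompactIn S) (hht : ∀ x, treeHeight hT x < ω₁) (hES : E ⊆ S)
    (hEF : (E ∩ F).Countable) (hW : ¬(downClosure E ∩ downClosure F).Countable) :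
    ∀ γ < ω₁, ∃ e ∈ E, γ ≤ treeHeight hT e ∧ ∃ f ∈ F, e < f := by
  intro γ hγ
  obtain ⟨δ, hδ, hEFδ⟩ := exists_lt_omega_one_forall_lt hEF (treeHeight hT) fun x _ => hht x
  obtain ⟨γ₀, hγ₀, htrace⟩ := exists_treeHeight_bound_of_le_notMem_downClosure hT hS hht
    (A := F) hES
  obtain ⟨x, ⟨⟨e, heE, hxe⟩, hxF⟩, hx⟩ := exists_le_treeHeight_of_not_countable hT hS hES
    inter_subset_left hW (max_lt hγ (max_lt hδ hγ₀))
  have hxe' := hT.treeHeight_strictMono.monotone hxe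
  obtain ⟨f, hfF, hef⟩ : e ∈ downClosure F := by
    by_contra heF
    exact (htrace e heE heF x hxe hxF).not_ge (le_of_max_le_right (le_of_max_le_right hx))
  refine ⟨e, heE, (le_of_max_le_left hx).trans hxe', f, hfF, hef.lt_of_ne ?_⟩
  rintro rfl
  exact (hEFδ e ⟨heE, hfF⟩).not_ge ((le_of_max_le_left (le_of_max_le_right hx)).trans hxe')

theorem exists_mem_inter_gt_of_unbounded (hT : IsTreeOrder T) (hS : OmegaOneCompactIn S)
    (hht : ∀ x, treeHeight hT x < ω₁) (hFS : F ⊆ S) (hEcl : closure E ∩ S ⊆ E)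
    (hFcl : closure F ∩ S ⊆ F) {P : Set T} (hPE : P ⊆ E) (hPF : ∀ e ∈ P, ∃ f ∈ F, e < f)
    (hP : ∀ γ < ω₁, ∃ e ∈ P, γ ≤ treeHeight hT e) :
    ∃ z ∈ E ∩ F, ∃ e ∈ P, e < z := by
  choose! up hupF hup using hPF
  obtain ⟨M, hMP, hM, hsep⟩ := exists_uncountable_pairwise_separated (treeHeight hT)
    (treeHeight hT ∘ up) (fun e he => (hT.treeHeight_strictMono (hup e he)).le)
    (fun e _ => hht (up e)) hP
  have hinj : InjOn up M := fun e he e' he' h => by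
    by_contra hne
    rcases hsep he he' hne with h' | h' <;> simp only [Function.comp_apply, h] at h'
    · exact h'.not_gt (hT.treeHeight_strictMono (hup e' (hMP he')))
    · exact h'.not_gt (hT.treeHeight_strictMono (h ▸ hup e (hMP he)))
  have hYF : up '' M ⊆ F := image_subset_iff.2 fun e he => hupF e (hMP he)
  obtain ⟨z, hzS, hzY⟩ := hS.exists_isLimitFromBelow (hYF.trans hFS)
    fun hY => hM (countable_of_injective_of_countable_image hinj hY)
  have hzM : IsLimitFromBelow M z :=
    hzY.of_image hT (fun e he => hup e (hMP he)) hsep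
  have hzE : z ∈ E :=
    hEcl ⟨treeTopology.mem_closure_of_isLimitFromBelow hT (hzM.mono (hMP.trans hPE)), hzS⟩
  have hzF : z ∈ F := hFcl ⟨treeTopology.mem_closure_of_isLimitFromBelow hT (hzY.mono hYF), hzS⟩
  obtain ⟨e, he, hez⟩ := hzM.exists_lt
  exact ⟨z, ⟨hzE, hzF⟩, e, hMP he, hez⟩

end OmegaOneCompact

theorem countable_inter_downClosures_general {T : Type u} [PartialOrder T]
    [tT : TopologicalSpace T] (htop : tT = treeTopology T)
    (hT : IsTreeOrder T) (hht : HasHeightOmega1 hT)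
    (S : Set T) (hSc : OmegaOneCompactIn S)
    (E F : Set T) (hE : E ⊆ S) (hF : F ⊆ S)
    (hEcl : closure E ∩ S ⊆ E) (hFcl : closure F ∩ S ⊆ F)
    (hEF : (E ∩ F).Countable) :
    (downClosure E ∩ downClosure F).Countable := by
  subst htop
  by_contra hW
  obtain ⟨δ, hδ, hEFδ⟩ := exists_lt_omega_one_forall_lt hEF (treeHeight hT) fun x _ => hht.1 x
  have hP := forall_exists_mem_lt_mem_of_not_countable_inter_downClosure hT hSc hht.1 hE hEF hW
  obtain ⟨z, hz, e, ⟨-, hδe, -⟩, hez⟩ := exists_mem_inter_gt_of_unbounded hT hSc hht.1 hF hEcl hFcl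
    (P := {e ∈ E | δ ≤ treeHeight hT e ∧ ∃ f ∈ F, e < f}) (fun e he => he.1) (fun e he => he.2.2)
    fun γ hγ => by
      obtain ⟨e, heE, hγe, hef⟩ := hP (max γ δ) (max_lt hγ hδ)
      exact ⟨e, ⟨heE, le_of_max_le_right hγe, hef⟩, le_of_max_le_left hγe⟩
  exact (hEFδ z hz).not_ge (hδe.trans (hT.treeHeight_strictMono hez).le)

/-- If E, F are closed subsets of an uncountable ω₁-compact subspace S of a
(Hausdorff) tree of height ω₁ and E ∩ F is countable, then E↓ ∩ F↓ is countable. -/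
theorem countable_inter_downClosures {T : Type u} [PartialOrder T]
    [tT : TopologicalSpace T] (htop : tT = treeTopology T)
    (hT : IsTreeOrder T) (hH : IsHausdorffTree T) (hht : HasHeightOmega1 hT)
    (S : Set T) (hSu : ¬S.Countable) (hSc : OmegaOneCompactIn S)
    (E F : Set T) (hE : E ⊆ S) (hF : F ⊆ S)
    (hEcl : closure E ∩ S ⊆ E) (hFcl : closure F ∩ S ⊆ F)
    (hEF : (E ∩ F).Countable) :
    (downClosure E ∩ downClosure F).Countable :=
  countable_inter_downClosures_general (tT := tT) htop hT hht S hSc E F hE hF hEcl hFcl hEF
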